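/- Let λ₀ ∈ ℂ with Im λ₀ ≠ 0 and suppose D(λ₀) = 0, i.e. ∫_ℝ ψ(x)·conj(φ(x))·(x−λ₀)^{−1} dx = −1. Then the function u(x) := ψ(x)·(x−λ₀)^{−1} belongs to L²(ℝ) and to D* with c_u = 0 (hence Γ₂u = 0), it satisfies ⟨u, φ⟩ = −1 and Ã*u = λ₀·u. In particular, if ψ ≠ 0 in L²(ℝ), then λ₀ is an eigenvalue of the restriction of Ã* to ker Γ₂, with eigenfunction x ↦ ψ(x)/(x−λ₀). -/

import Mathlib

open MeasureTheory Filter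

/-- The (paper-convention) `L²(ℝ)` inner product `⟨f,g⟩ = ∫ f · conj g`,
linear in the first argument. -/
noncomputable def ip (f g : ℝ → ℂ) : ℂ :=
  ∫ x : ℝ, f x * (starRingEnd ℂ) (g x)

/-- The boundary operator `Γ₁`, evaluated on `g ∈ D*` with associated constant `c = c_g`:
`Γ₁ g = ∫_ℝ ( g(x) − c·sign(x)·(x²+1)^{−1/2} ) dx`. -/
noncomputable def Gam1 (g : ℝ → ℂ) (c : ℂ) : ℂ :=
  ∫ x : ℝ, (g x - c * ((Real.sign x : ℝ) : ℂ) * (((Real.sqrt (x ^ 2 + 1) : ℝ) : ℂ))⁻¹)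

/-! Multiplication by the resolvent `(x − λ₀)⁻¹` is bounded by `|Im λ₀|⁻¹`, so `u = ψ/(x − λ₀)`
and `x·u = ψ + λ₀·u` are square integrable. The identity `(x − λ₀)·u = ψ` gives the eigenvalue
equation once `⟨u, φ⟩ = D(λ₀) − 1 = −1`, and it shows that `u` vanishes only where `ψ` does. -/

section Resolvent

variable {z : ℂ}

lemma Complex.ofReal_sub_ne_zero_of_im_ne_zero (hz : z.im ≠ 0) (x : ℝ) : (x : ℂ) - z ≠ 0 := by
  intro h
  apply hz
  simpa using congrArg Complex.im h

lemma Complex.norm_inv_ofReal_sub_le (hz : z.im ≠ 0) (x : ℝ) :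
    ‖((x : ℂ) - z)⁻¹‖ ≤ |z.im|⁻¹ := by
  rw [norm_inv]
  refine inv_anti₀ (abs_pos.mpr hz) ?_
  simpa using Complex.abs_im_le_norm ((x : ℂ) - z)

lemma MeasureTheory.MemLp.mul_inv_ofReal_sub {p : ENNReal} {μ : Measure ℝ} {ψ : ℝ → ℂ}
    (hψ : MemLp ψ p μ) (hz : z.im ≠ 0) : MemLp (fun x : ℝ => ψ x * ((x : ℂ) - z)⁻¹) p μ := by
  have hcont : Continuous fun x : ℝ => ((x : ℂ) - z)⁻¹ :=
    (Complex.continuous_ofReal.sub continuous_const).inv₀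
      (Complex.ofReal_sub_ne_zero_of_im_ne_zero hz)
  refine hψ.of_le_mul (c := |z.im|⁻¹)
    (hψ.aestronglyMeasurable.mul hcont.aestronglyMeasurable) ?_
  filter_upwards with x
  rw [norm_mul, mul_comm |z.im|⁻¹]
  exact mul_le_mul_of_nonneg_left (Complex.norm_inv_ofReal_sub_le hz x) (norm_nonneg _)

lemma Complex.ofReal_mul_mul_inv_ofReal_sub (hz : z.im ≠ 0) (x : ℝ) (w : ℂ) :
    (x : ℂ) * (w * ((x : ℂ) - z)⁻¹) = w + z * (w * ((x : ℂ) - z)⁻¹) := by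
  have := Complex.ofReal_sub_ne_zero_of_im_ne_zero hz x
  field_simp
  ring

lemma ae_mul_inv_ofReal_sub_eq_zero_iff {μ : Measure ℝ} {ψ : ℝ → ℂ} (hz : z.im ≠ 0) :
    (fun x : ℝ => ψ x * ((x : ℂ) - z)⁻¹) =ᵐ[μ] 0 ↔ ψ =ᵐ[μ] 0 := by
  refine eventually_congr (Eventually.of_forall fun x => ?_)
  simp [Complex.ofReal_sub_ne_zero_of_im_ne_zero hz x]

end Resolvent

theorem stmt19_general (φ ψ : ℝ → ℂ)
    (hψ : MemLp ψ 2 (volume : Measure ℝ))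
    (lam₀ : ℂ) (hlam₀ : lam₀.im ≠ 0)
    -- `D(λ₀) = 0`
    (hD : (∫ x : ℝ, ψ x * (starRingEnd ℂ) (φ x) * ((x : ℂ) - lam₀)⁻¹) = -1) :
    -- `u(x) := ψ(x)/(x − λ₀)` lies in `L²(ℝ)`
    MemLp (fun x : ℝ => ψ x * ((x : ℂ) - lam₀)⁻¹) 2 (volume : Measure ℝ) ∧
    -- `u ∈ D*` with `c_u = 0` (hence `Γ₂ u = 0`)
    MemLp (fun x : ℝ => (x : ℂ) * (ψ x * ((x : ℂ) - lam₀)⁻¹) - 0) 2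
      (volume : Measure ℝ) ∧
    -- `⟨u, φ⟩ = −1`
    ip (fun x : ℝ => ψ x * ((x : ℂ) - lam₀)⁻¹) φ = -1 ∧
    -- `Ã* u = λ₀ · u`
    (∀ x : ℝ,
      ((x : ℂ) * (ψ x * ((x : ℂ) - lam₀)⁻¹) - 0) +
          ip (fun t : ℝ => ψ t * ((t : ℂ) - lam₀)⁻¹) φ * ψ x =
        lam₀ * (ψ x * ((x : ℂ) - lam₀)⁻¹)) ∧
    -- if `ψ ≠ 0` in `L²(ℝ)`, the eigenfunction `u` is nonzero, so `λ₀` is an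
    -- eigenvalue of the restriction of `Ã*` to `ker Γ₂`
    (¬ ψ =ᵐ[(volume : Measure ℝ)] 0 →
      ¬ (fun x : ℝ => ψ x * ((x : ℂ) - lam₀)⁻¹) =ᵐ[(volume : Measure ℝ)] 0) := by
  have hu := hψ.mul_inv_ofReal_sub hlam₀
  have hip : ip (fun x : ℝ => ψ x * ((x : ℂ) - lam₀)⁻¹) φ = -1 := by
    rw [← hD, ip]
    congr 1 with x
    ring
  have hxu : (fun x : ℝ => (x : ℂ) * (ψ x * ((x : ℂ) - lam₀)⁻¹) - 0) =
      ψ + fun x : ℝ => lam₀ * (ψ x * ((x : ℂ) - lam₀)⁻¹) := by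
    ext x
    simp [Complex.ofReal_mul_mul_inv_ofReal_sub hlam₀]
  refine ⟨hu, hxu ▸ hψ.add (hu.const_mul lam₀), hip, fun x => ?_,
    mt (ae_mul_inv_ofReal_sub_eq_zero_iff hlam₀).mp⟩
  rw [hip, Complex.ofReal_mul_mul_inv_ofReal_sub hlam₀]
  ring

theorem stmt19 (φ ψ : ℝ → ℂ)
    (hφ : MemLp φ 2 (volume : Measure ℝ)) (hψ : MemLp ψ 2 (volume : Measure ℝ))
    (lam₀ : ℂ) (hlam₀ : lam₀.im ≠ 0)
    -- `D(λ₀) = 0`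
    (hD : (∫ x : ℝ, ψ x * (starRingEnd ℂ) (φ x) * ((x : ℂ) - lam₀)⁻¹) = -1) :
    -- `u(x) := ψ(x)/(x − λ₀)` lies in `L²(ℝ)`
    MemLp (fun x : ℝ => ψ x * ((x : ℂ) - lam₀)⁻¹) 2 (volume : Measure ℝ) ∧
    -- `u ∈ D*` with `c_u = 0` (hence `Γ₂ u = 0`)
    MemLp (fun x : ℝ => (x : ℂ) * (ψ x * ((x : ℂ) - lam₀)⁻¹) - 0) 2
      (volume : Measure ℝ) ∧
    -- `⟨u, φ⟩ = −1`
    ip (fun x : ℝ => ψ x * ((x : ℂ) - lam₀)⁻¹) φ = -1 ∧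
    -- `Ã* u = λ₀ · u`
    (∀ x : ℝ,
      ((x : ℂ) * (ψ x * ((x : ℂ) - lam₀)⁻¹) - 0) +
          ip (fun t : ℝ => ψ t * ((t : ℂ) - lam₀)⁻¹) φ * ψ x =
        lam₀ * (ψ x * ((x : ℂ) - lam₀)⁻¹)) ∧
    -- if `ψ ≠ 0` in `L²(ℝ)`, the eigenfunction `u` is nonzero, so `λ₀` is an
    -- eigenvalue of the restriction of `Ã*` to `ker Γ₂`
    (¬ ψ =ᵐ[(volume : Measure ℝ)] 0 →
      ¬ (fun x : ℝ => ψ x * ((x : ℂ) - lam₀)⁻¹) =ᵐ[(volume : Measure ℝ)] 0) :=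
  stmt19_general φ ψ hψ lam₀ hlam₀ hD
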